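/- arXiv:1001.0448 — 3 statements merged into one kernel-verified Lean document; each statement's English description precedes it below -/
import Mathlib

section
/- Let k be a quasi-complete totally ordered rational tropical semifield and M a straight pre-reflexive k-module. Then every extremal element of M has a dual element in M∨. -/
/-! # Tropical semifields and tropical modules -/

/-- A tropical semifield: a commutative semiring with idempotent addition
(`⊕` is `+`, `⊙` is `*`, the zero element `−∞` is `0`, the unity is `1`)
in which every nonzero element has a multiplicative inverse. -/
class TropSemifield (k : Type*) extends CommSemiring k where
  add_idem : ∀ a : k, a + a = a
  exists_inv : ∀ a : k, a ≠ 0 → ∃ b : k, a * b = 1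

/-- A tropical semigroup: commutative idempotent monoid, written additively
(the zero element is `−∞`). -/
class TropSemigroup (M : Type*) extends AddCommMonoid M where
  add_idem : ∀ v : M, v + v = v

/-- A module over a tropical semifield. -/
class TropModule (k : Type*) (M : Type*) [TropSemifield k] [TropSemigroup M] extends
    SMul k M where
  mul_smul : ∀ (a b : k) (v : M), (a * b) • v = a • b • v
  one_smul : ∀ v : M, (1 : k) • v = v
  add_smul : ∀ (a b : k) (v : M), (a + b) • v = a • v + b • v
  smul_add : ∀ (a : k) (v w : M), a • (v + w) = a • v + a • w
  zero_smul : ∀ v : M, (0 : k) • v = 0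
  smul_zero : ∀ a : k, a • (0 : M) = 0

/-- The canonical partial order `v ≤ w ↔ v ⊕ w = w`. -/
def tle {M : Type*} [Add M] (v w : M) : Prop := v + w = w

/-- Strict version of the canonical order. -/
def tlt {M : Type*} [Add M] (v w : M) : Prop := tle v w ∧ v ≠ w

/-- The canonical order of `k` is total. -/
def TotallyOrderedTSF (k : Type*) [TropSemifield k] : Prop :=
  ∀ a b : k, tle a b ∨ tle b a

/-- Every nonempty subset of `k` admits an infimum. -/
def QuasiCompleteTSF (k : Type*) [TropSemifield k] : Prop :=
  ∀ S : Set k, S.Nonempty →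
    ∃ c : k, (∀ x ∈ S, tle c x) ∧ ∀ d : k, (∀ x ∈ S, tle d x) → tle d c

/-- `k` is rational: `m`-th roots exist and `k` has no maximum element. -/
def RationalTSF (k : Type*) [TropSemifield k] : Prop :=
  (∀ (a : k) (m : ℕ), m ≠ 0 → ∃ b : k, b ^ m = a) ∧ ∀ a : k, ∃ b : k, tlt a b

instance (priority := 100) TropSemifield.toTropSemigroup (k : Type*) [TropSemifield k] :
    TropSemigroup k :=
  { (inferInstance : AddCommMonoid k) with add_idem := TropSemifield.add_idem }

instance TropModule.self (k : Type*) [TropSemifield k] : TropModule k k :=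
  { (inferInstance : SMul k k) with
    mul_smul := fun a b v => mul_assoc a b v
    one_smul := fun v => one_mul v
    add_smul := fun a b v => add_mul a b v
    smul_add := fun a v w => mul_add a v w
    zero_smul := fun v => zero_mul v
    smul_zero := fun a => mul_zero a }

instance TropSemigroup.pi {ι : Type*} (M : Type*) [TropSemigroup M] :
    TropSemigroup (ι → M) :=
  { Pi.addCommMonoid with add_idem := fun v => funext fun i => TropSemigroup.add_idem (v i) }

instance TropModule.pi (k : Type*) {ι : Type*} (M : Type*) [TropSemifield k] [TropSemigroup M]
    [TropModule k M] : TropModule k (ι → M) where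
  smul a v := fun i => a • v i
  mul_smul a b v := funext fun i => TropModule.mul_smul a b (v i)
  one_smul v := funext fun i => TropModule.one_smul (v i)
  add_smul a b v := funext fun i => TropModule.add_smul a b (v i)
  smul_add a v w := funext fun i => TropModule.smul_add a (v i) (w i)
  zero_smul v := funext fun i => TropModule.zero_smul (v i)
  smul_zero a := funext fun i => TropModule.smul_zero (a := a)

/-! ## Homomorphisms of tropical modules -/

/-- A homomorphism of `k`-modules. -/
structure TropHom (k : Type*) (M : Type*) (N : Type*) [TropSemifield k] [TropSemigroup M]
    [TropModule k M] [TropSemigroup N] [TropModule k N] where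
  toFun : M → N
  map_zero' : toFun 0 = 0
  map_add' : ∀ v w : M, toFun (v + w) = toFun v + toFun w
  map_smul' : ∀ (a : k) (v : M), toFun (a • v) = a • toFun v

namespace TropHom

variable {k M N : Type*} [TropSemifield k] [TropSemigroup M] [TropModule k M]
  [TropSemigroup N] [TropModule k N]

theorem ext' {f g : TropHom k M N} (h : ∀ v, f.toFun v = g.toFun v) : f = g := by
  cases f; cases g
  simp only [mk.injEq]
  exact funext h

instance : Zero (TropHom k M N) :=
  ⟨⟨fun _ => 0, rfl, fun _ _ => (add_zero (0 : N)).symm,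
    fun a _ => (TropModule.smul_zero (M := N) a).symm⟩⟩

instance : Add (TropHom k M N) :=
  ⟨fun f g =>
    { toFun := fun v => f.toFun v + g.toFun v
      map_zero' := by
        show f.toFun 0 + g.toFun 0 = 0
        rw [f.map_zero', g.map_zero', add_zero]
      map_add' := fun v w => by
        show f.toFun (v + w) + g.toFun (v + w) =
          (f.toFun v + g.toFun v) + (f.toFun w + g.toFun w)
        rw [f.map_add', g.map_add', add_add_add_comm]
      map_smul' := fun a v => by
        show f.toFun (a • v) + g.toFun (a • v) = a • (f.toFun v + g.toFun v)
        rw [f.map_smul', g.map_smul', TropModule.smul_add] }⟩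

instance : SMul k (TropHom k M N) :=
  ⟨fun a f =>
    { toFun := fun v => a • f.toFun v
      map_zero' := by
        show a • f.toFun 0 = 0
        rw [f.map_zero', TropModule.smul_zero]
      map_add' := fun v w => by
        show a • f.toFun (v + w) = a • f.toFun v + a • f.toFun w
        rw [f.map_add', TropModule.smul_add]
      map_smul' := fun b v => by
        show a • f.toFun (b • v) = b • (a • f.toFun v)
        rw [f.map_smul', ← TropModule.mul_smul, ← TropModule.mul_smul, mul_comm a b] }⟩

instance : TropSemigroup (TropHom k M N) where
  add := (· + ·)
  zero := 0
  add_assoc f g h := ext' fun v => add_assoc (f.toFun v) (g.toFun v) (h.toFun v)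
  zero_add f := ext' fun v => zero_add (f.toFun v)
  add_zero f := ext' fun v => add_zero (f.toFun v)
  add_comm f g := ext' fun v => add_comm (f.toFun v) (g.toFun v)
  nsmul := nsmulRec
  add_idem f := ext' fun v => TropSemigroup.add_idem (f.toFun v)

instance : TropModule k (TropHom k M N) where
  smul := (· • ·)
  mul_smul a b f := ext' fun v => TropModule.mul_smul a b (f.toFun v)
  one_smul f := ext' fun v => TropModule.one_smul (f.toFun v)
  add_smul a b f := ext' fun v => TropModule.add_smul a b (f.toFun v)
  smul_add a f g := ext' fun v => TropModule.smul_add a (f.toFun v) (g.toFun v)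
  zero_smul f := ext' fun v => TropModule.zero_smul (f.toFun v)
  smul_zero a := ext' fun v => TropModule.smul_zero (M := N) a

end TropHom

/-- The canonical map `M → (M∨)∨`, `v ↦ (ξ ↦ ⟨v, ξ⟩)`. -/
def iotaFun (k : Type*) (M : Type*) [TropSemifield k] [TropSemigroup M] [TropModule k M] :
    M → TropHom k (TropHom k M k) k :=
  fun v => ⟨fun ξ => ξ.toFun v, rfl, fun ξ η => rfl, fun a ξ => rfl⟩

/-! ## Order-theoretic notions -/

/-- `z` is the infimum of `v` and `w` w.r.t. the canonical order. -/
def IsTInf {M : Type*} [Add M] (v w z : M) : Prop :=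
  tle z v ∧ tle z w ∧ ∀ y : M, tle y v → tle y w → tle y z

/-- A tropical module is straight if it is a finitely distributive ordered lattice. -/
def Straight (M : Type*) [Add M] : Prop :=
  (∀ v w : M, ∃ z : M, IsTInf v w z) ∧
    ∀ v₁ v₂ w z₁ z₂ : M, IsTInf v₁ w z₁ → IsTInf v₂ w z₂ → IsTInf (v₁ + v₂) w (z₁ + z₂)

/-- Infimum of `v` and `w` within the subset `N`. -/
def IsTInfOn {M : Type*} [Add M] (N : Set M) (v w z : M) : Prop :=
  tle z v ∧ tle z w ∧ ∀ y ∈ N, tle y v → tle y w → tle y z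

/-- A submodule (viewed as a subset) is straight. -/
def StraightSet {M : Type*} [Add M] (N : Set M) : Prop :=
  (∀ v ∈ N, ∀ w ∈ N, ∃ z ∈ N, IsTInfOn N v w z) ∧
    ∀ v₁ ∈ N, ∀ v₂ ∈ N, ∀ w ∈ N, ∀ z₁ ∈ N, ∀ z₂ ∈ N,
      IsTInfOn N v₁ w z₁ → IsTInfOn N v₂ w z₂ → IsTInfOn N (v₁ + v₂) w (z₁ + z₂)

/-! ## Generation, bases, extremal elements -/

/-- `S` generates the `k`-module `M`. -/
def TGenerates (k : Type*) {M : Type*} [TropSemifield k] [TropSemigroup M] [TropModule k M]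
    (S : Set M) : Prop :=
  ∀ v : M, ∃ (r : ℕ) (a : Fin r → k) (x : Fin r → M), (∀ i, x i ∈ S) ∧ v = ∑ i, a i • x i

/-- `M` is finitely generated. -/
def TFG (k : Type*) (M : Type*) [TropSemifield k] [TropSemigroup M] [TropModule k M] : Prop :=
  ∃ S : Finset M, TGenerates k (↑S : Set M)

/-- A basis: a generating set no proper subset of which generates. -/
def TBasis (k : Type*) {M : Type*} [TropSemifield k] [TropSemigroup M] [TropModule k M]
    (S : Set M) : Prop :=
  TGenerates k S ∧ ∀ T : Set M, T ⊂ S → ¬ TGenerates k T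

/-- `S` generates the subset `N` (viewed as a submodule of `M`). -/
def TGeneratesOn (k : Type*) {M : Type*} [TropSemifield k] [TropSemigroup M] [TropModule k M]
    (N S : Set M) : Prop :=
  ∀ v ∈ N, ∃ (r : ℕ) (a : Fin r → k) (x : Fin r → M), (∀ i, x i ∈ S) ∧ v = ∑ i, a i • x i

/-- A basis of the submodule `N ⊆ M`. -/
def TBasisOn (k : Type*) {M : Type*} [TropSemifield k] [TropSemigroup M] [TropModule k M]
    (N S : Set M) : Prop :=
  S ⊆ N ∧ TGeneratesOn k N S ∧ ∀ T : Set M, T ⊂ S → ¬ TGeneratesOn k N T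

/-- An extremal element. -/
def TExtremal {M : Type*} [Add M] [Zero M] (e : M) : Prop :=
  e ≠ 0 ∧ ∀ v w : M, v + w = e → v = e ∨ w = e

/-- The ray `k ⊙ e` generated by an element. -/
def tray (k : Type*) {M : Type*} [TropSemifield k] [TropSemigroup M] [TropModule k M]
    (e : M) : Set M :=
  Set.range fun a : k => a • e

/-- The set of extremal rays of `M`. -/
def extRays (k : Type*) (M : Type*) [TropSemifield k] [TropSemigroup M] [TropModule k M] :
    Set (Set M) :=
  {R : Set M | ∃ e : M, TExtremal e ∧ R = tray k e}

/-- The dimension of a straight reflexive module: the number of extremal rays. -/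
noncomputable def tdim (k : Type*) (M : Type*) [TropSemifield k] [TropSemigroup M]
    [TropModule k M] : ℕ :=
  (extRays k M).ncard

/-! ## Further notions on homomorphisms -/

/-- A lightly surjective homomorphism. -/
def LightlySurjective {k M N : Type*} [TropSemifield k] [TropSemigroup M] [TropModule k M]
    [TropSemigroup N] [TropModule k N] (α : TropHom k M N) : Prop :=
  ∀ w : N, ∃ v : M, tle w (α.toFun v)

/-- A lattice-preserving homomorphism. -/
def LatticePreserving {k M N : Type*} [TropSemifield k] [TropSemigroup M] [TropModule k M]
    [TropSemigroup N] [TropModule k N] (α : TropHom k M N) : Prop :=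
  ∀ v w : M, ∀ x : N, tle x (α.toFun v) → tle x (α.toFun w) →
    ∃ y : M, tle y v ∧ tle y w ∧ tle x (α.toFun y)

/-- The inclusion of the subset `N` into the ambient module is lattice-preserving. -/
def LatPresSet {M : Type*} [Add M] (N : Set M) : Prop :=
  ∀ v ∈ N, ∀ w ∈ N, ∀ x : M, tle x v → tle x w → ∃ y ∈ N, tle y v ∧ tle y w ∧ tle x y

/-- `η` is the dual element of `e`: `⟨e,η⟩ = 0` and
`⟨v,η⟩ ⊙ ⟨e,ξ⟩ ≤ ⟨v,ξ⟩` for all `v`, `ξ`. -/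
def IsDualElement {k M : Type*} [TropSemifield k] [TropSemigroup M] [TropModule k M]
    (e : M) (η : TropHom k M k) : Prop :=
  η.toFun e = 1 ∧ ∀ (v : M) (ξ : TropHom k M k), tle (η.toFun v * ξ.toFun e) (ξ.toFun v)

/-! ## Locators -/

/-- A locator of `M`: a lower-saturated subsemigroup of `(M, ⊕)` that generates `M`. -/
structure IsLocator (k : Type*) {M : Type*} [TropSemifield k] [TropSemigroup M] [TropModule k M]
    (S : Set M) : Prop where
  lower : ∀ v w : M, tle v w → w ∈ S → v ∈ S
  add_mem : ∀ v ∈ S, ∀ w ∈ S, v + w ∈ S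
  generates : TGenerates k S

/-- The multiplicative inverse `⊘a` (junk value `−∞` at `−∞`). -/
noncomputable def tinv {k : Type*} [TropSemifield k] (a : k) : k := by
  classical exact if h : a = 0 then 0 else Classical.choose (TropSemifield.exists_inv a h)

/-- Scalar multiplication on locators: `a ⊙̌ S = (⊘a) ⊙ S` for `a ≠ −∞`, `(−∞) ⊙̌ S = M`. -/
noncomputable def locSMul {k M : Type*} [TropSemifield k] [TropSemigroup M] [TropModule k M]
    (a : k) (S : Set M) : Set M := by
  classical exact if a = 0 then Set.univ else (fun v => tinv a • v) '' S

/-- `U` is the infimum of the locators `S`, `T` in `Loc(M)` (whose canonical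
order is reverse inclusion, the sum being intersection). -/
def IsLocInf (k : Type*) {M : Type*} [TropSemifield k] [TropSemigroup M] [TropModule k M]
    (S T U : Set M) : Prop :=
  IsLocator k U ∧ S ⊆ U ∧ T ⊆ U ∧
    ∀ W : Set M, IsLocator k W → S ⊆ W → T ⊆ W → U ⊆ W

/-! ## Submodules -/

/-- A subset of a `k`-module which is a submodule. -/
structure IsTSubmodule (k : Type*) {M : Type*} [TropSemifield k] [TropSemigroup M]
    [TropModule k M] (N : Set M) : Prop where
  zero_mem : (0 : M) ∈ N
  add_mem : ∀ v ∈ N, ∀ w ∈ N, v + w ∈ N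
  smul_mem : ∀ (a : k), ∀ v ∈ N, a • v ∈ N

/-- A bundled submodule of a `k`-module. -/
structure TSub (k : Type*) (M : Type*) [TropSemifield k] [TropSemigroup M] [TropModule k M] where
  carrier : Set M
  zero_mem : (0 : M) ∈ carrier
  add_mem : ∀ v ∈ carrier, ∀ w ∈ carrier, v + w ∈ carrier
  smul_mem : ∀ (a : k), ∀ v ∈ carrier, a • v ∈ carrier

instance TSub.instZero {k M : Type*} [TropSemifield k] [TropSemigroup M] [TropModule k M]
    (N : TSub k M) : Zero ↥N.carrier :=
  ⟨⟨0, N.zero_mem⟩⟩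

instance TSub.instAdd {k M : Type*} [TropSemifield k] [TropSemigroup M] [TropModule k M]
    (N : TSub k M) : Add ↥N.carrier :=
  ⟨fun v w => ⟨v.1 + w.1, N.add_mem v.1 v.2 w.1 w.2⟩⟩

instance TSub.instSMul {k M : Type*} [TropSemifield k] [TropSemigroup M] [TropModule k M]
    (N : TSub k M) : SMul k ↥N.carrier :=
  ⟨fun a v => ⟨a • v.1, N.smul_mem a v.1 v.2⟩⟩

instance TSub.semigroup {k M : Type*} [TropSemifield k] [TropSemigroup M] [TropModule k M]
    (N : TSub k M) : TropSemigroup ↥N.carrier where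
  add := (· + ·)
  zero := 0
  add_assoc a b c := Subtype.ext (add_assoc a.1 b.1 c.1)
  zero_add a := Subtype.ext (zero_add a.1)
  add_zero a := Subtype.ext (add_zero a.1)
  add_comm a b := Subtype.ext (add_comm a.1 b.1)
  nsmul := nsmulRec
  add_idem a := Subtype.ext (TropSemigroup.add_idem a.1)

instance TSub.module {k M : Type*} [TropSemifield k] [TropSemigroup M] [TropModule k M]
    (N : TSub k M) : TropModule k ↥N.carrier where
  smul := (· • ·)
  mul_smul a b v := Subtype.ext (TropModule.mul_smul a b v.1)
  one_smul v := Subtype.ext (TropModule.one_smul v.1)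
  add_smul a b v := Subtype.ext (TropModule.add_smul a b v.1)
  smul_add a v w := Subtype.ext (TropModule.smul_add a v.1 w.1)
  zero_smul v := Subtype.ext (TropModule.zero_smul v.1)
  smul_zero a := Subtype.ext (TropModule.smul_zero (M := M) a)

/-! ## Linear combinations -/

theorem tsmul_sum {k M : Type*} [TropSemifield k] [TropSemigroup M] [TropModule k M]
    (a : k) {ι : Type*} (s : Finset ι) (f : ι → M) :
    a • (∑ i ∈ s, f i) = ∑ i ∈ s, a • f i := by
  classical
  induction s using Finset.induction_on with
  | empty => simpa using TropModule.smul_zero (M := M) a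
  | insert _ _ h ih => rw [Finset.sum_insert h, Finset.sum_insert h, TropModule.smul_add, ih]

/-- The homomorphism `kⁿ → M` sending the `i`-th standard basis element to `e i`. -/
def linComb {k M : Type*} [TropSemifield k] [TropSemigroup M] [TropModule k M] {n : ℕ}
    (e : Fin n → M) : TropHom k (Fin n → k) M where
  toFun v := ∑ i, v i • e i
  map_zero' :=
    (Finset.sum_congr rfl fun i _ => TropModule.zero_smul (e i)).trans Finset.sum_const_zero
  map_add' v w := by
    rw [← Finset.sum_add_distrib]
    exact Finset.sum_congr rfl fun i _ => TropModule.add_smul (v i) (w i) (e i)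
  map_smul' a v := by
    rw [tsmul_sum]
    exact Finset.sum_congr rfl fun i _ => TropModule.mul_smul a (v i) (e i)

/-- The homomorphism `M → kⁿ` induced by an `n`-tuple of elements of `M∨`. -/
def dualTuple {k M : Type*} [TropSemifield k] [TropSemigroup M] [TropModule k M] {n : ℕ}
    (η : Fin n → TropHom k M k) : TropHom k M (Fin n → k) where
  toFun v := fun i => (η i).toFun v
  map_zero' := funext fun i => (η i).map_zero'
  map_add' v w := funext fun i => (η i).map_add' v w
  map_smul' a v := funext fun i => (η i).map_smul' a v

/-!
The dual element is `η v = inf {ξ v | ξ e = 1}`, the infimum over the linear forms normalised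
at `e`; pre-reflexivity makes this family nonempty. Since `k` is totally ordered, `⊕` is `max` and
infima of nonempty sets commute with `⊕`, so a pointwise infimum of a downward directed family of
linear forms is linear. The normalised forms are directed: the inf-convolution of two of them is a
linear form below both, and it is still normalised because in a straight module an extremal
`e ≤ u₁ ⊕ u₂` lies below `u₁` or `u₂`. The dual inequality is `η` tested against `tinv (ξ e) • ξ`.
-/

section CanonicalOrder

variable {N : Type*} [TropSemigroup N]

theorem tle_refl (a : N) : tle a a := TropSemigroup.add_idem a

theorem tle_trans {a b c : N} (hab : tle a b) (hbc : tle b c) : tle a c := by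
  unfold tle at *
  rw [← hbc, ← add_assoc, hab]

theorem tle_antisymm {a b : N} (hab : tle a b) (hba : tle b a) : a = b := by
  rw [← hab, add_comm]
  exact hba.symm

theorem tle_add_left (a b : N) : tle a (a + b) := by
  rw [tle, ← add_assoc, TropSemigroup.add_idem]

theorem tle_add_right (a b : N) : tle b (a + b) := by
  rw [add_comm]
  exact tle_add_left b a

theorem add_tle {a b c : N} (hac : tle a c) (hbc : tle b c) : tle (a + b) c := by
  rw [tle, add_assoc, hbc, hac]

theorem add_tle_add {a b c d : N} (hab : tle a b) (hcd : tle c d) : tle (a + c) (b + d) :=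
  add_tle (tle_trans hab (tle_add_left b d)) (tle_trans hcd (tle_add_right b d))

theorem zero_tle (a : N) : tle (0 : N) a := zero_add a

/-- Meeting with `e` and using distributivity writes `e = (u₁ ∧ e) ⊕ (u₂ ∧ e)`. -/
theorem TExtremal.tle_or_tle_of_tle_add (hN : Straight N) {e u₁ u₂ : N} (he : TExtremal e)
    (h : tle e (u₁ + u₂)) : tle e u₁ ∨ tle e u₂ := by
  obtain ⟨z₁, hz₁⟩ := hN.1 u₁ e
  obtain ⟨z₂, hz₂⟩ := hN.1 u₂ e
  have hz : IsTInf (u₁ + u₂) e (z₁ + z₂) := hN.2 u₁ u₂ e z₁ z₂ hz₁ hz₂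
  have hsum : z₁ + z₂ = e := tle_antisymm hz.2.1 (hz.2.2 e h (tle_refl e))
  rcases he.2 z₁ z₂ hsum with rfl | rfl
  · exact Or.inl hz₁.1
  · exact Or.inr hz₂.1

end CanonicalOrder

def IsTGLB {N : Type*} [Add N] (S : Set N) (c : N) : Prop :=
  (∀ x ∈ S, tle c x) ∧ ∀ d : N, (∀ x ∈ S, tle d x) → tle d c

namespace IsTGLB

variable {N : Type*} [TropSemigroup N] {S T : Set N} {a b : N}

theorem unique (ha : IsTGLB S a) (hb : IsTGLB S b) : a = b :=
  tle_antisymm (hb.2 a ha.1) (ha.2 b hb.1)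

theorem of_mem (ha : a ∈ S) (hle : ∀ x ∈ S, tle a x) : IsTGLB S a :=
  ⟨hle, fun _ hd => hd a ha⟩

theorem eq_zero_of_zero_mem (ha : IsTGLB S a) (h0 : (0 : N) ∈ S) : a = 0 :=
  ha.unique (of_mem h0 fun x _ => zero_tle x)

theorem tle_of_forall_exists (ha : IsTGLB S a) (hb : IsTGLB T b)
    (h : ∀ y ∈ T, ∃ x ∈ S, tle x y) : tle a b :=
  hb.2 a fun y hy =>
    let ⟨x, hx, hxy⟩ := h y hy
    tle_trans (ha.1 x hx) hxy

end IsTGLB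

section Semifield

variable {k : Type*} [TropSemifield k]

theorem mul_tinv_cancel {a : k} (ha : a ≠ 0) : a * tinv a = 1 := by
  rw [tinv, dif_neg ha]
  exact Classical.choose_spec (TropSemifield.exists_inv a ha)

theorem tinv_mul_cancel {a : k} (ha : a ≠ 0) : tinv a * a = 1 := by
  rw [mul_comm, mul_tinv_cancel ha]

theorem mul_tle_mul_left {a b : k} (c : k) (h : tle a b) : tle (c * a) (c * b) := by
  rw [tle, ← mul_add, h]

theorem tle_of_mul_tle_mul_left {a b c : k} (hc : c ≠ 0) (h : tle (c * a) (c * b)) : tle a b := by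
  simpa only [← mul_assoc, tinv_mul_cancel hc, one_mul] using mul_tle_mul_left (tinv c) h

theorem add_eq_left_or_eq_right (hto : TotallyOrderedTSF k) (a b : k) : a + b = a ∨ a + b = b := by
  rcases hto a b with h | h
  · exact Or.inr h
  · exact Or.inl (by rw [add_comm]; exact h)

theorem IsTGLB.mul_image {S : Set k} {c : k} (hc : IsTGLB S c) {a : k} (ha : a ≠ 0) :
    IsTGLB ((a * ·) '' S) (a * c) := by
  refine ⟨?_, fun d hd => ?_⟩
  · rintro _ ⟨x, hx, rfl⟩
    exact mul_tle_mul_left a (hc.1 x hx)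
  · have hlb : ∀ x ∈ S, tle (tinv a * d) x := fun x hx =>
      tle_of_mul_tle_mul_left ha (by
        rw [← mul_assoc, mul_tinv_cancel ha, one_mul]
        exact hd _ ⟨x, hx, rfl⟩)
    simpa only [← mul_assoc, mul_tinv_cancel ha, one_mul] using
      mul_tle_mul_left a (hc.2 _ hlb)

/-- In a totally ordered semifield `⊕` is `max`, so `inf S ⊕ inf T` is the infimum of the
sums `s ⊕ t`. -/
theorem IsTGLB.tle_add (hto : TotallyOrderedTSF k) {S T : Set k} {a b t : k}
    (ha : IsTGLB S a) (hb : IsTGLB T b) (h : ∀ x ∈ S, ∀ y ∈ T, tle t (x + y)) :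
    tle t (a + b) := by
  by_contra hne
  obtain ⟨x, hx, hxt⟩ : ∃ x ∈ S, ¬ tle t x := by
    by_contra! hS
    exact hne (tle_trans (ha.2 t hS) (tle_add_left a b))
  obtain ⟨y, hy, hyt⟩ : ∃ y ∈ T, ¬ tle t y := by
    by_contra! hT
    exact hne (tle_trans (hb.2 t hT) (tle_add_right a b))
  rcases add_eq_left_or_eq_right hto x y with hxy | hxy
  · exact hxt (hxy ▸ h x hx y hy)
  · exact hyt (hxy ▸ h x hx y hy)

end Semifield

section Functionals

variable {k M : Type*} [TropSemifield k] [TropSemigroup M] [TropModule k M]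

theorem smul_tle_smul (a : k) {v w : M} (h : tle v w) : tle (a • v) (a • w) := by
  rw [tle, ← TropModule.smul_add, h]

theorem TropHom.map_tle_map (ξ : TropHom k M k) {v w : M} (h : tle v w) :
    tle (ξ.toFun v) (ξ.toFun w) := by
  rw [tle, ← ξ.map_add', h]

theorem TropHom.map_smul_eq_mul (ξ : TropHom k M k) (a : k) (v : M) :
    ξ.toFun (a • v) = a * ξ.toFun v :=
  ξ.map_smul' a v

theorem TropHom.smul_toFun (a : k) (ξ : TropHom k M k) (v : M) :
    (a • ξ).toFun v = a * ξ.toFun v :=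
  rfl

theorem TropHom.tinv_smul_toFun_self (ξ : TropHom k M k) {e : M} (hξ : ξ.toFun e ≠ 0) :
    (tinv (ξ.toFun e) • ξ).toFun e = 1 := by
  rw [TropHom.smul_toFun, tinv_mul_cancel hξ]

theorem image_mul_eq_of_smul_mem (S : M → Set k)
    (hsmul : ∀ (a : k) (v : M), ∀ s ∈ S v, a * s ∈ S (a • v)) {a : k} (ha : a ≠ 0) (v : M) :
    (a * ·) '' S v = S (a • v) := by
  ext c
  constructor
  · rintro ⟨s, hs, rfl⟩
    exact hsmul a v s hs
  · intro hc
    refine ⟨tinv a * c, ?_, ?_⟩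
    · simpa only [← TropModule.mul_smul, tinv_mul_cancel ha, TropModule.one_smul] using
        hsmul (tinv a) _ c hc
    · show a * (tinv a * c) = c
      rw [← mul_assoc, mul_tinv_cancel ha, one_mul]

theorem exists_tropHom_isTGLB (hto : TotallyOrderedTSF k) (hqc : QuasiCompleteTSF k)
    (S : M → Set k) (hne : ∀ v, (S v).Nonempty) (hzero : (0 : k) ∈ S 0)
    (hsmul : ∀ (a : k) (v : M), ∀ s ∈ S v, a * s ∈ S (a • v))
    (hmono : ∀ v w : M, tle v w → ∀ s ∈ S w, ∃ r ∈ S v, tle r s)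
    (hadd : ∀ v w : M, ∀ s ∈ S v, ∀ s' ∈ S w, ∃ r ∈ S (v + w), tle r (s + s')) :
    ∃ η : TropHom k M k, ∀ v, IsTGLB (S v) (η.toFun v) := by
  have hglb : ∀ v, ∃ c, IsTGLB (S v) c := fun v => hqc (S v) (hne v)
  choose f hf using hglb
  have hf0 : f 0 = 0 := (hf 0).eq_zero_of_zero_mem hzero
  refine ⟨⟨f, hf0, fun v w => ?_, fun a v => ?_⟩, hf⟩
  · apply tle_antisymm
    · refine IsTGLB.tle_add hto (hf v) (hf w) fun s hs s' hs' => ?_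
      obtain ⟨r, hr, hrs⟩ := hadd v w s hs s' hs'
      exact tle_trans ((hf _).1 r hr) hrs
    · exact add_tle ((hf v).tle_of_forall_exists (hf _) (hmono v _ (tle_add_left v w)))
        ((hf w).tle_of_forall_exists (hf _) (hmono w _ (tle_add_right v w)))
  · change f (a • v) = a * f v
    by_cases ha : a = 0
    · rw [ha, TropModule.zero_smul, hf0, zero_mul]
    · have h := (hf v).mul_image ha
      rw [image_mul_eq_of_smul_mem S hsmul ha v] at h
      exact (hf _).unique h

theorem exists_tropHom_isTGLB_of_directed (hto : TotallyOrderedTSF k) (hqc : QuasiCompleteTSF k)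
    (F : Set (TropHom k M k)) (hF : F.Nonempty)
    (hdir : ∀ ξ ∈ F, ∀ ζ ∈ F, ∃ θ ∈ F, ∀ v, tle (θ.toFun v) (ξ.toFun v) ∧
      tle (θ.toFun v) (ζ.toFun v)) :
    ∃ η : TropHom k M k, ∀ v, IsTGLB ((fun ξ => ξ.toFun v) '' F) (η.toFun v) := by
  obtain ⟨ξ₀, hξ₀⟩ := hF
  refine exists_tropHom_isTGLB hto hqc _ (fun v => ⟨_, ξ₀, hξ₀, rfl⟩)
    ⟨ξ₀, hξ₀, ξ₀.map_zero'⟩ ?_ ?_ ?_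
  · rintro a v _ ⟨ξ, hξ, rfl⟩
    exact ⟨ξ, hξ, ξ.map_smul_eq_mul a v⟩
  · rintro v w hvw _ ⟨ξ, hξ, rfl⟩
    exact ⟨_, ⟨ξ, hξ, rfl⟩, ξ.map_tle_map hvw⟩
  · rintro v w _ ⟨ξ, hξ, rfl⟩ _ ⟨ζ, hζ, rfl⟩
    obtain ⟨θ, hθ, hθle⟩ := hdir ξ hξ ζ hζ
    refine ⟨_, ⟨θ, hθ, rfl⟩, show tle (θ.toFun (v + w)) (ξ.toFun v + ζ.toFun w) from ?_⟩
    rw [θ.map_add']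
    exact add_tle_add (hθle v).1 (hθle w).2

/-- The inf-convolution `(ξ □ ζ)(u) = inf {ξ u₁ ⊕ ζ u₂ | u ≤ u₁ ⊕ u₂}` is the infimum of this
set. -/
def infConvSet (ξ ζ : TropHom k M k) (u : M) : Set k :=
  {c | ∃ u₁ u₂ : M, tle u (u₁ + u₂) ∧ ξ.toFun u₁ + ζ.toFun u₂ = c}

theorem left_mem_infConvSet (ξ ζ : TropHom k M k) (u : M) : ξ.toFun u ∈ infConvSet ξ ζ u :=
  ⟨u, 0, by rw [add_zero]; exact tle_refl u, by rw [ζ.map_zero', add_zero]⟩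

theorem right_mem_infConvSet (ξ ζ : TropHom k M k) (u : M) : ζ.toFun u ∈ infConvSet ξ ζ u :=
  ⟨0, u, by rw [zero_add]; exact tle_refl u, by rw [ξ.map_zero', zero_add]⟩

theorem exists_tropHom_isTGLB_infConvSet (hto : TotallyOrderedTSF k) (hqc : QuasiCompleteTSF k)
    (ξ ζ : TropHom k M k) :
    ∃ θ : TropHom k M k, ∀ u, IsTGLB (infConvSet ξ ζ u) (θ.toFun u) := by
  refine exists_tropHom_isTGLB hto hqc _ (fun u => ⟨_, left_mem_infConvSet ξ ζ u⟩)
    (by simpa only [ξ.map_zero'] using left_mem_infConvSet ξ ζ 0) ?_ ?_ ?_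
  · rintro a u _ ⟨u₁, u₂, hu, rfl⟩
    refine ⟨a • u₁, a • u₂, ?_, ?_⟩
    · rw [← TropModule.smul_add]
      exact smul_tle_smul a hu
    · rw [ξ.map_smul_eq_mul, ζ.map_smul_eq_mul, mul_add]
  · rintro v w hvw _ ⟨u₁, u₂, hw, rfl⟩
    exact ⟨_, ⟨u₁, u₂, tle_trans hvw hw, rfl⟩, tle_refl _⟩
  · rintro v w _ ⟨u₁, u₂, hv, rfl⟩ _ ⟨u₁', u₂', hw, rfl⟩
    refine ⟨_, ⟨u₁ + u₁', u₂ + u₂', ?_, rfl⟩, ?_⟩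
    · rw [add_add_add_comm u₁ u₁' u₂ u₂']
      exact add_tle_add hv hw
    · rw [ξ.map_add', ζ.map_add', add_add_add_comm]
      exact tle_refl _

/-- The inf-convolution of two linear forms normalised at `e` is again normalised at `e`. -/
theorem TExtremal.exists_tropHom_eq_one_tle_of_eq_one (hto : TotallyOrderedTSF k)
    (hqc : QuasiCompleteTSF k) (hM : Straight M) {e : M} (he : TExtremal e) {ξ ζ : TropHom k M k}
    (hξ : ξ.toFun e = 1) (hζ : ζ.toFun e = 1) :
    ∃ θ : TropHom k M k, θ.toFun e = 1 ∧
      ∀ v, tle (θ.toFun v) (ξ.toFun v) ∧ tle (θ.toFun v) (ζ.toFun v) := by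
  obtain ⟨θ, hθ⟩ := exists_tropHom_isTGLB_infConvSet hto hqc ξ ζ
  refine ⟨θ, (hθ e).unique (IsTGLB.of_mem (hξ ▸ left_mem_infConvSet ξ ζ e) ?_), fun v =>
    ⟨(hθ v).1 _ (left_mem_infConvSet ξ ζ v), (hθ v).1 _ (right_mem_infConvSet ξ ζ v)⟩⟩
  rintro _ ⟨u₁, u₂, hu, rfl⟩
  rcases he.tle_or_tle_of_tle_add hM hu with h | h
  · exact tle_trans (hξ ▸ ξ.map_tle_map h) (tle_add_left _ _)
  · exact tle_trans (hζ ▸ ζ.map_tle_map h) (tle_add_right _ _)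

theorem exists_tropHom_toFun_eq_one (hpre : Function.Injective (iotaFun k M)) {e : M} (he : e ≠ 0) :
    ∃ ξ : TropHom k M k, ξ.toFun e = 1 := by
  obtain ⟨ξ, hξ⟩ : ∃ ξ : TropHom k M k, ξ.toFun e ≠ 0 := by
    by_contra! h
    exact he (hpre (TropHom.ext' fun ξ => (h ξ).trans ξ.map_zero'.symm))
  exact ⟨_, ξ.tinv_smul_toFun_self hξ⟩

theorem isDualElement_of_isTGLB {e : M} (η : TropHom k M k)
    (hη : ∀ v, IsTGLB ((fun ξ => ξ.toFun v) '' {ξ : TropHom k M k | ξ.toFun e = 1}) (η.toFun v))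
    (hF : ∃ ξ : TropHom k M k, ξ.toFun e = 1) :
    IsDualElement e η := by
  obtain ⟨ξ₀, hξ₀⟩ := hF
  refine ⟨(hη e).unique (IsTGLB.of_mem ⟨ξ₀, hξ₀, hξ₀⟩ ?_), fun v ξ => ?_⟩
  · rintro _ ⟨ξ, hξ, rfl⟩
    exact hξ ▸ tle_refl _
  by_cases hξ : ξ.toFun e = 0
  · rw [hξ, mul_zero]
    exact zero_tle _
  · have h := (hη v).1 _ ⟨_, ξ.tinv_smul_toFun_self hξ, rfl⟩
    simpa only [TropHom.smul_toFun, mul_comm _ (ξ.toFun e), ← mul_assoc, mul_tinv_cancel hξ,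
      one_mul] using mul_tle_mul_left (ξ.toFun e) h

end Functionals

theorem stmt14_general {k M : Type*} [TropSemifield k] [TropSemigroup M] [TropModule k M]
    (hto : TotallyOrderedTSF k) (hqc : QuasiCompleteTSF k)
    (hstraight : Straight M) (hpre : Function.Injective (iotaFun k M))
    (e : M) (he : TExtremal e) :
    ∃ η : TropHom k M k, IsDualElement e η := by
  have hF : ∃ ξ : TropHom k M k, ξ.toFun e = 1 := exists_tropHom_toFun_eq_one hpre he.1
  obtain ⟨η, hη⟩ := exists_tropHom_isTGLB_of_directed hto hqc {ξ | ξ.toFun e = 1} hF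
    fun _ hξ _ hζ => he.exists_tropHom_eq_one_tle_of_eq_one hto hqc hstraight hξ hζ
  exact ⟨η, isDualElement_of_isTGLB η hη hF⟩

theorem stmt14 {k M : Type*} [TropSemifield k] [TropSemigroup M] [TropModule k M]
    (hto : TotallyOrderedTSF k) (hqc : QuasiCompleteTSF k) (hrat : RationalTSF k)
    (hstraight : Straight M) (hpre : Function.Injective (iotaFun k M))
    (e : M) (he : TExtremal e) :
    ∃ η : TropHom k M k, IsDualElement e η :=
  stmt14_general hto hqc hstraight hpre e he
end

section
/- Let M be a submodule of ℝT^{n+1} generated by finitely many elements of ℝ^{n+1}. Then the following are equivalent: (i) M is lattice-preserving in ℝT^{n+1}, i.e. the componentwise infimum of any two elements of M belongs to M; (ii) M ∖ {−∞} is a convex subset of ℝ^{n+1} in the ordinary (real) sense. -/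
/-! ## The tropical semifield of real numbers -/

/-- The tropical semifield of real numbers `ℝT = ℝ ∪ {−∞}`,
with `⊕ = max`, `⊙ = +`, zero element `−∞` and unity `0`. -/
def RT : Type := WithBot ℝ

namespace RT

/-- Tropical addition `⊕` on `ℝT`: the maximum. -/
noncomputable def tadd (a b : RT) : RT := @max (WithBot ℝ) _ a b

/-- Tropical multiplication `⊙` on `ℝT`: ordinary addition. -/
def tmul (a b : RT) : RT := @HAdd.hAdd (WithBot ℝ) (WithBot ℝ) (WithBot ℝ) _ a b

/-- The zero element `−∞` of `ℝT`. -/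
def tzero : RT := @Bot.bot (WithBot ℝ) _

/-- The unity `0` of `ℝT`. -/
def tone : RT := ((0 : ℝ) : WithBot ℝ)

noncomputable def tnsmul : ℕ → RT → RT
  | 0, _ => tzero
  | n + 1, a => tadd (tnsmul n a) a

noncomputable def tnpow : ℕ → RT → RT
  | 0, _ => tone
  | n + 1, a => tmul (tnpow n a) a

noncomputable def tnatCast : ℕ → RT
  | 0 => tzero
  | n + 1 => tadd (tnatCast n) tone

theorem wb_zero_add (a : WithBot ℝ) : ((0 : ℝ) : WithBot ℝ) + a = a := by
  rw [WithBot.coe_zero, zero_add]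

theorem wb_add_zero (a : WithBot ℝ) : a + ((0 : ℝ) : WithBot ℝ) = a := by
  rw [WithBot.coe_zero, add_zero]

theorem wb_left_distrib (a b c : WithBot ℝ) : a + max b c = max (a + b) (a + c) := by
  have h : Monotone (fun x : WithBot ℝ => a + x) := fun x y hxy => add_le_add_right hxy _
  exact h.map_max

theorem wb_right_distrib (a b c : WithBot ℝ) : max a b + c = max (a + c) (b + c) := by
  have h : Monotone (fun x : WithBot ℝ => x + c) := fun x y hxy => add_le_add_left hxy _
  exact h.map_max

theorem wb_exists_inv (a : WithBot ℝ) (h : a ≠ ⊥) :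
    ∃ b : WithBot ℝ, a + b = ((0 : ℝ) : WithBot ℝ) := by
  obtain ⟨x, rfl⟩ := WithBot.ne_bot_iff_exists.mp h
  exact ⟨((-x : ℝ) : WithBot ℝ), by rw [← WithBot.coe_add, add_neg_cancel]⟩

noncomputable instance instTropSemifield : TropSemifield RT where
  add := tadd
  zero := tzero
  mul := tmul
  one := tone
  add_assoc a b c := @max_assoc (WithBot ℝ) _ a b c
  add_comm a b := @max_comm (WithBot ℝ) _ a b
  zero_add a := max_eq_right (@bot_le (WithBot ℝ) _ _ a)
  add_zero a := max_eq_left (@bot_le (WithBot ℝ) _ _ a)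
  nsmul := tnsmul
  nsmul_zero a := rfl
  nsmul_succ n a := rfl
  mul_assoc a b c := @add_assoc (WithBot ℝ) _ a b c
  mul_comm a b := @add_comm (WithBot ℝ) _ a b
  one_mul a := wb_zero_add a
  mul_one a := wb_add_zero a
  zero_mul a := @WithBot.bot_add ℝ _ a
  mul_zero a := @WithBot.add_bot ℝ _ a
  left_distrib := wb_left_distrib
  right_distrib := wb_right_distrib
  npow := tnpow
  npow_zero a := rfl
  npow_succ n a := rfl
  natCast := tnatCast
  natCast_zero := rfl
  natCast_succ n := rfl
  add_idem a := @max_self (WithBot ℝ) _ a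
  exists_inv a h := wb_exists_inv a h

end RT

/-- The canonical inclusion `ℝ → ℝT`. -/
def rc (x : ℝ) : RT := (x : WithBot ℝ)

theorem RT.rc_mul (x y : ℝ) : rc x * rc y = rc (x + y) := (WithBot.coe_add x y).symm

theorem RT.rc_zero : rc 0 = (1 : RT) := rfl

/-! ## Tropical projective space -/

theorem RT.cons_ne_zero {n : ℕ} (v : Fin n → ℝ) :
    (Fin.cons (rc 0) (fun i => rc (v i)) : Fin (n + 1) → RT) ≠ 0 := by
  intro h
  have h0 := congrFun h 0
  rw [Fin.cons_zero] at h0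
  exact WithBot.coe_ne_bot h0

/-- Two nonzero vectors of `ℝT^{n+1}` are projectively equivalent if they differ
by the scalar action of `ℝ`. -/
def projSetoid (n : ℕ) : Setoid {v : Fin (n + 1) → RT // v ≠ 0} where
  r v w := ∃ c : ℝ, w.1 = rc c • v.1
  iseqv := by
    constructor
    · intro v
      exact ⟨0, (TropModule.one_smul v.1).symm⟩
    · rintro v w ⟨c, hc⟩
      refine ⟨-c, ?_⟩
      rw [hc, ← TropModule.mul_smul, RT.rc_mul, neg_add_cancel, RT.rc_zero,
        TropModule.one_smul]
    · rintro u v w ⟨c, hc⟩ ⟨d, hd⟩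
      refine ⟨d + c, ?_⟩
      rw [hd, hc, ← TropModule.mul_smul, RT.rc_mul]

/-- The tropical projective space `ℝT P^n`. -/
def TP (n : ℕ) : Type := Quotient (projSetoid n)

/-- The canonical projection `φ : ℝT^{n+1} ∖ {−∞} → ℝT P^n`. -/
def tphi {n : ℕ} (v : Fin (n + 1) → RT) (h : v ≠ 0) : TP n :=
  Quotient.mk (projSetoid n) ⟨v, h⟩

/-- The subset `M = φ⁻¹(P) ∪ {−∞}` of `ℝT^{n+1}` corresponding to `P ⊆ ℝT P^n`. -/
def Mof {n : ℕ} (P : Set (TP n)) : Set (Fin (n + 1) → RT) :=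
  {v | ∃ h : v ≠ 0, tphi v h ∈ P} ∪ {0}

/-- A subset of `ℝT P^n` is tropically convex if the corresponding subset of
`ℝT^{n+1}` is a submodule. -/
def TropConvexP {n : ℕ} (Q : Set (TP n)) : Prop :=
  IsTSubmodule RT (Mof Q)

/-- The tropically convex hull. -/
def tchull {n : ℕ} (A : Set (TP n)) : Set (TP n) :=
  ⋂₀ {Q : Set (TP n) | TropConvexP Q ∧ A ⊆ Q}

/-- The embedding `ℝ^n → ℝT P^n`, `(a₁, …, aₙ) ↦ φ(0, a₁, …, aₙ)`. -/
def embR {n : ℕ} (v : Fin n → ℝ) : TP n :=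
  tphi (Fin.cons (rc 0) fun i => rc (v i)) (RT.cons_ne_zero v)

/-- A (tropical) polytope in `ℝT P^n`: the tropically convex hull of finitely
many points of `ℝ^n`. -/
def IsTropPolytope {n : ℕ} (P : Set (TP n)) : Prop :=
  ∃ S : Finset (TP n), (∀ x ∈ S, ∃ v : Fin n → ℝ, x = embR v) ∧ P = tchull ↑S

/-- A polytrope: a polytope that is convex as a subset of `ℝ^n` in the ordinary sense. -/
def IsPolytrope {n : ℕ} (P : Set (TP n)) : Prop :=
  IsTropPolytope P ∧ P ⊆ Set.range embR ∧ Convex ℝ (embR ⁻¹' P)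

/-!
Let `G ⊆ ℝ^ι` be the real generators and `C = N ∩ ℝ^ι`. A real `x` lies in `N` iff for every
`j₀` a single generator `g` has `x j₀ - x j ≤ g j₀ - g j` for all `j` (then
`x = ⊕_{j₀} (x j₀ - g j₀) ⊙ g`). Swapping the quantifiers gives the polytrope
`P = {x | ∀ j₀ j, ∃ g ∈ G, x j₀ - x j ≤ g j₀ - g j}`, which contains `C` and is both convex and
closed under `min`, so both conditions of the theorem amount to `C = P`. If `N` is closed under
`min`, each point of `P` is a `max` over `j₀` of `min`s over `j` of translated generators. If `C` is
convex, then for each `j₀` a single generator maximizes all the differences `g j₀ - g j`: a maximal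
one dominates, by closedness, the points near it on each segment to another generator, hence that
generator. Nonzero elements of `N` have real coordinates because the generators do.
-/

theorem SupClosed.mem_of_forall_exists_le_apply_eq {ι α : Type*} [Fintype ι] [Nonempty ι]
    [SemilatticeSup α] {C : Set (ι → α)} (hC : SupClosed C) {x : ι → α}
    (h : ∀ j, ∃ w ∈ C, w ≤ x ∧ w j = x j) : x ∈ C := by
  choose w hwC hwle hweq using h
  convert hC.finsetSup'_mem Finset.univ_nonempty (fun j _ => hwC j)
  refine le_antisymm (fun i => ?_) (Finset.sup'_le _ _ fun j _ => hwle j)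
  rw [Finset.sup'_apply]
  exact (hweq i).ge.trans (Finset.le_sup' (fun j => w j i) (Finset.mem_univ i))

open Filter Topology in
theorem Convex.exists_isGreatest_of_dominating {F : Type*} [AddCommGroup F] [PartialOrder F]
    [IsOrderedAddMonoid F] [Module ℝ F] [PosSMulReflectLE ℝ F] [TopologicalSpace F]
    [ContinuousAdd F] [ContinuousSMul ℝ F] [ClosedIicTopology F]
    {K A : Set F} (hK : Convex ℝ K) (hA : A.Finite) (hAne : A.Nonempty) (hAK : A ⊆ K)
    (hdom : ∀ y ∈ K, ∃ a ∈ A, y ≤ a) : ∃ a, IsGreatest A a := by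
  obtain ⟨a, haA, hmax⟩ := hA.exists_maximal hAne
  refine ⟨a, haA, fun b hb => ?_⟩
  have hseg : ∀ᶠ t in 𝓝[>] (0 : ℝ), ∃ e ∈ A, a + t • (b - a) ≤ e := by
    filter_upwards [Ioo_mem_nhdsGT one_pos] with t ht
    exact hdom _ (hK.add_smul_sub_mem (hAK haA) (hAK hb) ⟨ht.1.le, ht.2.le⟩)
  obtain ⟨e, heA, he⟩ := hA.frequently_exists.1 hseg.frequently
  have hlim : Tendsto (fun t : ℝ => a + t • (b - a)) (𝓝[>] 0) (𝓝 a) := by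
    have : Continuous (fun t : ℝ => a + t • (b - a)) := by fun_prop
    simpa using (this.tendsto 0).mono_left nhdsWithin_le_nhds
  have hea : e ≤ a := hmax heA (le_of_tendsto_of_frequently hlim he)
  obtain ⟨t, hte, ht⟩ := (he.and_eventually self_mem_nhdsWithin).exists
  have : t • (b - a) ≤ t • 0 := by
    rw [smul_zero]
    simpa using hte.trans hea
  simpa using le_of_smul_le_smul_left this ht

namespace RT

/-- The identity `RT = WithBot ℝ`, under which tropical `+` and `*` become `max` and `+`;
it gives access to the order and arithmetic of `WithBot ℝ`. -/
def toWithBot (a : RT) : WithBot ℝ := a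

theorem toWithBot_injective : Function.Injective toWithBot := fun _ _ h => h

@[simp] theorem toWithBot_add (a b : RT) : (a + b).toWithBot = max a.toWithBot b.toWithBot := rfl

@[simp] theorem toWithBot_zero : (0 : RT).toWithBot = ⊥ := rfl

theorem toWithBot_sum {κ : Type*} (s : Finset κ) (f : κ → RT) :
    (∑ i ∈ s, f i).toWithBot = s.sup fun i => (f i).toWithBot := by
  classical
  induction s using Finset.induction_on with
  | empty => rfl
  | insert i s hi ih => rw [Finset.sum_insert hi, Finset.sup_insert, toWithBot_add, ih]

end RT

section RealPoints

variable {ι : Type*}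

def toRT (x : ι → ℝ) : ι → RT := fun i => rc (x i)

theorem toRT_injective : Function.Injective (toRT (ι := ι)) :=
  fun _ _ h => funext fun i => WithBot.coe_injective (congrFun h i)

theorem mem_range_toRT {v : ι → RT} (hv : ∀ i, v i ≠ 0) : v ∈ Set.range toRT := by
  choose x hx using fun i => WithBot.ne_bot_iff_exists.1 (hv i)
  exact ⟨x, funext hx⟩

theorem toRT_sup (x y : ι → ℝ) : toRT (x ⊔ y) = toRT x + toRT y :=
  funext fun i => RT.toWithBot_injective (WithBot.coe_max (x i) (y i))

theorem toRT_inf (x y : ι → ℝ) :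
    toRT (x ⊓ y) = fun i => @min (WithBot ℝ) _ (toRT x i) (toRT y i) :=
  funext fun i => WithBot.coe_min (x i) (y i)

theorem toRT_const_add (c : ℝ) (x : ι → ℝ) : toRT (fun j => c + x j) = rc c • toRT x :=
  funext fun j => (RT.rc_mul c (x j)).symm

def realPoints (N : Set (ι → RT)) : Set (ι → ℝ) := {x | toRT x ∈ N}

variable {N : Set (ι → RT)}

theorem IsTSubmodule.supClosed_realPoints (hN : IsTSubmodule RT N) : SupClosed (realPoints N) :=
  fun x hx y hy => by
    simp only [realPoints, Set.mem_ofPred_eq, toRT_sup] at *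
    exact hN.add_mem _ hx _ hy

theorem IsTSubmodule.const_add_mem_realPoints (hN : IsTSubmodule RT N) (c : ℝ) {x : ι → ℝ}
    (hx : x ∈ realPoints N) : (fun j => c + x j) ∈ realPoints N := by
  simp only [realPoints, Set.mem_ofPred_eq, toRT_const_add] at *
  exact hN.smul_mem _ _ hx

end RealPoints

/-- For nonempty `G` this is the polytrope `{x | x j₀ - x j ≤ c j₀ j}` with
`c j₀ j = max_{g ∈ G} (g j₀ - g j)`. -/
def polytropeHull {ι : Type*} (G : Set (ι → ℝ)) : Set (ι → ℝ) :=
  {x | ∀ j₀ j, ∃ g ∈ G, x j₀ - x j ≤ g j₀ - g j}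

section PolytropeHull

variable {ι : Type*} {G : Set (ι → ℝ)}

theorem convex_polytropeHull : Convex ℝ (polytropeHull G) := by
  intro x hx y hy a b ha hb hab j₀ j
  obtain ⟨g, hg, hgx⟩ := hx j₀ j
  obtain ⟨h, hh, hhy⟩ := hy j₀ j
  have hcomb : (a • x + b • y) j₀ - (a • x + b • y) j
      = a * (x j₀ - x j) + b * (y j₀ - y j) := by
    simp only [Pi.add_apply, Pi.smul_apply, smul_eq_mul]
    ring
  have hmax : ∀ c, x j₀ - x j ≤ c → y j₀ - y j ≤ c →
      a * (x j₀ - x j) + b * (y j₀ - y j) ≤ c := fun c hxc hyc =>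
    calc a * (x j₀ - x j) + b * (y j₀ - y j) ≤ a * c + b * c :=
          add_le_add (mul_le_mul_of_nonneg_left hxc ha) (mul_le_mul_of_nonneg_left hyc hb)
      _ = c := by rw [← add_mul, hab, one_mul]
  rw [hcomb]
  rcases le_total (g j₀ - g j) (h j₀ - h j) with hgh | hgh
  · exact ⟨h, hh, hmax _ (hgx.trans hgh) hhy⟩
  · exact ⟨g, hg, hmax _ hgx (hhy.trans hgh)⟩

theorem infClosed_polytropeHull : InfClosed (polytropeHull G) := by
  intro x hx y hy j₀ j
  rcases le_total (x j) (y j) with hxy | hxy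
  · obtain ⟨g, hg, hgx⟩ := hx j₀ j
    refine ⟨g, hg, ?_⟩
    simp only [Pi.inf_apply, inf_eq_left.2 hxy]
    linarith [min_le_left (x j₀) (y j₀)]
  · obtain ⟨g, hg, hgy⟩ := hy j₀ j
    refine ⟨g, hg, ?_⟩
    simp only [Pi.inf_apply, inf_eq_right.2 hxy]
    linarith [min_le_right (x j₀) (y j₀)]

end PolytropeHull

structure IsRealGenerated {ι : Type*} (N : Set (ι → RT)) (G : Set (ι → ℝ)) : Prop where
  isTSubmodule : IsTSubmodule RT N
  subset_realPoints : G ⊆ realPoints N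
  generates : TGeneratesOn RT N (toRT '' G)

theorem isRealGenerated_preimage_toRT {ι : Type*} {N S : Set (ι → RT)}
    (hN : IsTSubmodule RT N) (hSN : S ⊆ N) (hSreal : ∀ v ∈ S, ∀ i, v i ≠ 0)
    (hS : TGeneratesOn RT N S) : IsRealGenerated N (toRT ⁻¹' S) where
  isTSubmodule := hN
  subset_realPoints _ hx := hSN hx
  generates := by
    rwa [Set.image_preimage_eq_of_subset fun v hv => mem_range_toRT (hSreal v hv)]

namespace IsRealGenerated

variable {ι : Type*} {N : Set (ι → RT)} {G : Set (ι → ℝ)}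

theorem exists_apply_eq_sup (hG : IsRealGenerated N G) {v : ι → RT} (hv : v ∈ N) :
    ∃ (r : ℕ) (a : Fin r → RT) (g : Fin r → ι → ℝ), (∀ i, g i ∈ G) ∧
      ∀ j, (v j).toWithBot = Finset.univ.sup fun i => (a i).toWithBot + g i j := by
  obtain ⟨r, a, x, hx, rfl⟩ := hG.generates v hv
  choose g hg hgx using hx
  refine ⟨r, a, g, hg, fun j => ?_⟩
  simp only [← hgx, Finset.sum_apply, RT.toWithBot_sum]
  rfl

theorem apply_ne_zero (hG : IsRealGenerated N G) {v : ι → RT} (hv : v ∈ N) (hv0 : v ≠ 0)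
    (j : ι) : v j ≠ 0 := by
  obtain ⟨r, a, g, -, hvg⟩ := hG.exists_apply_eq_sup hv
  obtain ⟨k, hk⟩ : ∃ k, v k ≠ 0 := by
    by_contra! h
    exact hv0 (funext h)
  obtain ⟨i, -, hi⟩ : ∃ i ∈ Finset.univ, (a i).toWithBot + g i k ≠ ⊥ := by
    by_contra! h
    exact hk (RT.toWithBot_injective ((hvg k).trans ((Finset.sup_eq_bot_iff _ _).2 h)))
  have hai : (a i).toWithBot ≠ ⊥ := fun h => hi (by rw [h, WithBot.bot_add])
  intro hj
  have hle := (Finset.le_sup (f := fun i => (a i).toWithBot + g i j) (Finset.mem_univ i)).trans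
    (hvg j).ge
  rw [hj, RT.toWithBot_zero, le_bot_iff, WithBot.add_eq_bot] at hle
  exact hle.elim hai WithBot.coe_ne_bot

theorem exists_dominating_of_mem (hG : IsRealGenerated N G) {x : ι → ℝ}
    (hx : x ∈ realPoints N) (j₀ : ι) : ∃ g ∈ G, ∀ j, x j₀ - x j ≤ g j₀ - g j := by
  obtain ⟨r, a, g, hg, hxg⟩ := hG.exists_apply_eq_sup hx
  have hxg' : ∀ j, (x j : WithBot ℝ) = Finset.univ.sup fun i => (a i).toWithBot + g i j := hxg
  have hne : (Finset.univ : Finset (Fin r)).Nonempty := by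
    by_contra! h
    simpa [h] using hxg' j₀
  obtain ⟨i, -, hi⟩ := Finset.exists_mem_eq_sup _ hne fun i => (a i).toWithBot + g i j₀
  obtain ⟨α, hα⟩ : ∃ α : ℝ, α = (a i).toWithBot := by
    refine WithBot.ne_bot_iff_exists.1 fun h => ?_
    simpa [h] using (hxg' j₀).trans hi
  have hx₀ : x j₀ = α + g i j₀ := by
    have := (hxg' j₀).trans hi
    rw [← hα] at this
    exact_mod_cast this
  refine ⟨g i, hg i, fun j => ?_⟩
  have hle : α + g i j ≤ x j := by
    have := (Finset.le_sup (f := fun i => (a i).toWithBot + g i j) (Finset.mem_univ i)).trans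
      (hxg' j).ge
    rw [← hα] at this
    exact_mod_cast this
  linarith

theorem mem_of_dominating [Fintype ι] [Nonempty ι] (hG : IsRealGenerated N G) {x : ι → ℝ}
    (hx : ∀ j₀, ∃ g ∈ G, ∀ j, x j₀ - x j ≤ g j₀ - g j) : x ∈ realPoints N := by
  refine hG.isTSubmodule.supClosed_realPoints.mem_of_forall_exists_le_apply_eq fun j₀ => ?_
  obtain ⟨g, hg, hgx⟩ := hx j₀
  refine ⟨fun j => (x j₀ - g j₀) + g j,
    hG.isTSubmodule.const_add_mem_realPoints _ (hG.subset_realPoints hg), fun j => ?_, by ring⟩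
  linarith [hgx j]

theorem min_mem_iff (hG : IsRealGenerated N G) :
    (∀ v ∈ N, ∀ w ∈ N, (fun i => @min (WithBot ℝ) _ (v i) (w i)) ∈ N) ↔
      InfClosed (realPoints N) := by
  refine ⟨fun hN x hx y hy => ?_, fun hC v hv w hw => ?_⟩
  · show toRT (x ⊓ y) ∈ N
    rw [toRT_inf]
    exact hN _ hx _ hy
  by_cases hv0 : v = 0
  · rw [show (fun i => @min (WithBot ℝ) _ (v i) (w i)) = (0 : ι → RT) from
      funext fun i => by rw [hv0]; exact min_eq_left (bot_le (α := WithBot ℝ))]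
    exact hG.isTSubmodule.zero_mem
  by_cases hw0 : w = 0
  · rw [show (fun i => @min (WithBot ℝ) _ (v i) (w i)) = (0 : ι → RT) from
      funext fun i => by rw [hw0]; exact min_eq_right (bot_le (α := WithBot ℝ))]
    exact hG.isTSubmodule.zero_mem
  obtain ⟨x, rfl⟩ := mem_range_toRT (hG.apply_ne_zero hv hv0)
  obtain ⟨y, rfl⟩ := mem_range_toRT (hG.apply_ne_zero hw hw0)
  rw [← toRT_inf]
  exact hC hv hw

theorem realPoints_subset_polytropeHull (hG : IsRealGenerated N G) :
    realPoints N ⊆ polytropeHull G := fun _ hx j₀ j =>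
  let ⟨g, hg, hgx⟩ := hG.exists_dominating_of_mem hx j₀
  ⟨g, hg, hgx j⟩

theorem polytropeHull_subset_of_infClosed [Fintype ι] [Nonempty ι] (hG : IsRealGenerated N G)
    (hC : InfClosed (realPoints N)) : polytropeHull G ⊆ realPoints N := by
  intro x hx
  refine hG.isTSubmodule.supClosed_realPoints.mem_of_forall_exists_le_apply_eq fun j₀ => ?_
  choose g hg hgx using hx j₀
  refine ⟨Finset.univ.inf' Finset.univ_nonempty fun j k => (x j₀ - g j j₀) + g j k,
    hC.finsetInf'_mem _ fun j _ =>
      hG.isTSubmodule.const_add_mem_realPoints _ (hG.subset_realPoints (hg j)),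
    fun k => ?_, ?_⟩
  · rw [Finset.inf'_apply]
    exact (Finset.inf'_le _ (Finset.mem_univ k)).trans (by linarith [hgx k])
  · simp [Finset.inf'_apply]

theorem exists_forall_diff_le_of_convex (hG : IsRealGenerated N G) (hfin : G.Finite)
    (hconv : Convex ℝ (realPoints N)) (hne : G.Nonempty) (j₀ : ι) :
    ∃ g₀ ∈ G, ∀ g ∈ G, ∀ j, g j₀ - g j ≤ g₀ j₀ - g₀ j := by
  let d : (ι → ℝ) →ₗ[ℝ] (ι → ℝ) :=
    LinearMap.pi fun j => LinearMap.proj (R := ℝ) (φ := fun _ : ι => ℝ) j₀ - LinearMap.proj j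
  obtain ⟨_, ⟨g₀, hg₀, rfl⟩, hmax⟩ := (hconv.linear_image d).exists_isGreatest_of_dominating
    (hfin.image d) (hne.image d) (Set.image_mono hG.subset_realPoints) <| by
      rintro _ ⟨x, hx, rfl⟩
      obtain ⟨g, hg, hgx⟩ := hG.exists_dominating_of_mem hx j₀
      exact ⟨d g, ⟨g, hg, rfl⟩, hgx⟩
  exact ⟨g₀, hg₀, fun g hg => hmax ⟨g, hg, rfl⟩⟩

theorem polytropeHull_subset_of_convex [Fintype ι] [Nonempty ι] (hG : IsRealGenerated N G)
    (hfin : G.Finite) (hconv : Convex ℝ (realPoints N)) : polytropeHull G ⊆ realPoints N := by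
  intro x hx
  refine hG.mem_of_dominating fun j₀ => ?_
  obtain ⟨g, hg, -⟩ := hx j₀ j₀
  obtain ⟨g₀, hg₀, hmax⟩ := hG.exists_forall_diff_le_of_convex hfin hconv ⟨g, hg⟩ j₀
  refine ⟨g₀, hg₀, fun j => ?_⟩
  obtain ⟨g, hg, hgx⟩ := hx j₀ j
  exact hgx.trans (hmax g hg j)

end IsRealGenerated

theorem stmt17 {n : ℕ} (N : Set (Fin (n + 1) → RT)) (hsub : IsTSubmodule RT N)
    (hfg : ∃ S : Finset (Fin (n + 1) → RT), ↑S ⊆ N ∧ (∀ v ∈ S, ∀ i, v i ≠ (0 : RT)) ∧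
      TGeneratesOn RT N ↑S) :
    (∀ v ∈ N, ∀ w ∈ N, (fun i => @min (WithBot ℝ) _ (v i) (w i)) ∈ N) ↔
      ((∀ v ∈ N, v ≠ 0 → ∀ i, v i ≠ (0 : RT)) ∧
        Convex ℝ {x : Fin (n + 1) → ℝ | (fun i => rc (x i)) ∈ N}) := by
  obtain ⟨S, hSN, hSreal, hS⟩ := hfg
  have hG := isRealGenerated_preimage_toRT hsub hSN hSreal hS
  have hfin : (toRT ⁻¹' ↑S).Finite :=
    S.finite_toSet.preimage (toRT_injective (ι := Fin (n + 1))).injOn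
  change _ ↔ _ ∧ Convex ℝ (realPoints N)
  rw [hG.min_mem_iff]
  constructor
  · intro hC
    have hP := hG.realPoints_subset_polytropeHull.antisymm
      (hG.polytropeHull_subset_of_infClosed hC)
    exact ⟨fun v hv hv0 => hG.apply_ne_zero hv hv0, hP ▸ convex_polytropeHull⟩
  · rintro ⟨-, hconv⟩
    have hP := hG.realPoints_subset_polytropeHull.antisymm
      (hG.polytropeHull_subset_of_convex hfin hconv)
    exact hP ▸ infClosed_polytropeHull
end

section
/- Let k be a totally ordered rational tropical semifield and let A be an n×n matrix over k such that all diagonal entries A_{ii} equal 0 (the unity of k) and the tropical determinant det(A) = ⊕_{s ∈ S_n} A_{1 s(1)} ⊙ ⋯ ⊙ A_{n s(n)} equals 0. Then the tropical matrix powers satisfy A^{⊙n} = A^{⊙(n−1)}. -/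
/-! Read `A` as a weighted digraph on `ι`: `(A ^ m) i j` is the tropical sum of the weights of the
walks with `m` steps from `i` to `j`. The term of the determinant belonging to the cyclic
permutation of a simple cycle is the weight of that cycle (the diagonal contributes `1` elsewhere),
so every simple cycle weighs at most `1`. A walk with `n` steps on `n` vertices repeats a vertex;
cutting out a repetition with the smallest gap removes a simple cycle and does not decrease the
weight, so every walk is dominated by a walk with at most `n - 1` steps and `A ^ n ≤ A ^ (n - 1)`.
Conversely `1 ⊕ A = A`, so the powers of `A` increase. -/

namespace tle

variable {M : Type*}

theorem refl [TropSemigroup M] (a : M) : tle a a := TropSemigroup.add_idem a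

theorem trans [AddSemigroup M] {a b c : M} (hab : tle a b) (hbc : tle b c) : tle a c := by
  unfold tle at *
  rw [← hbc, ← add_assoc, hab]

theorem antisymm [AddCommMagma M] {a b : M} (hab : tle a b) (hba : tle b a) : a = b := by
  unfold tle at *
  rw [← hab, add_comm, hba]

theorem mul [Semiring M] {a b c d : M} (hab : tle a b) (hcd : tle c d) : tle (a * c) (b * d) :=
  trans (show a * c + b * c = b * c by rw [← add_mul, hab])
    (show b * c + b * d = b * d by rw [← mul_add, hcd])

end tle

theorem zero_tle_s18 {M : Type*} [AddZeroClass M] (a : M) : tle 0 a := zero_add a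

theorem tle_sum_of_mem {ι M : Type*} [TropSemigroup M] {s : Finset ι} (f : ι → M) {x : ι}
    (hx : x ∈ s) : tle (f x) (∑ i ∈ s, f i) := by
  classical
  unfold tle
  rw [← Finset.add_sum_erase s f hx, ← add_assoc, TropSemigroup.add_idem]

theorem sum_tle {ι M : Type*} [AddCommMonoid M] {s : Finset ι} {f : ι → M} {c : M}
    (h : ∀ i ∈ s, tle (f i) c) : tle (∑ i ∈ s, f i) c := by
  classical
  induction s using Finset.induction_on with
  | empty => exact zero_tle_s18 c
  | insert x s hx ih =>
    rw [Finset.sum_insert hx]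
    unfold tle at *
    rw [add_assoc, ih fun i hi => h i (Finset.mem_insert_of_mem hi),
      h x (Finset.mem_insert_self x s)]

section Excise

variable {ι : Type*}

/-- The walk `p` with the closed subwalk between the times `s` and `s + d` cut out. -/
def excise (p : ℕ → ι) (s d : ℕ) : ℕ → ι :=
  fun u => if u ≤ s then p u else p (u + d)

theorem excise_of_le (p : ℕ → ι) {s u : ℕ} (d : ℕ) (hu : u ≤ s) : excise p s d u = p u :=
  if_pos hu

theorem excise_sub (p : ℕ → ι) {s t b : ℕ} (hst : s ≤ t) (htb : t ≤ b) (hp : p s = p t) :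
    excise p s (t - s) (b - (t - s)) = p b := by
  unfold excise
  split_ifs with h
  · rw [show b - (t - s) = s by omega, hp, show t = b by omega]
  · rw [Nat.sub_add_cancel (by omega)]

theorem exists_loop_injOn_of_not_injOn {p : ℕ → ι} {a b : ℕ}
    (h : ¬ Set.InjOn p (Set.Icc a b)) :
    ∃ s t, a ≤ s ∧ s < t ∧ t ≤ b ∧ p s = p t ∧ Set.InjOn p (Set.Ico s t) := by
  classical
  have hex : ∃ d, ∃ s, a ≤ s ∧ s + d ≤ b ∧ 0 < d ∧ p s = p (s + d) := by
    simp only [Set.InjOn, Set.mem_Icc, not_forall] at h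
    obtain ⟨u, ⟨hau, hub⟩, v, ⟨hav, hvb⟩, huv, hne⟩ := h
    rcases Nat.lt_or_gt_of_ne hne with hlt | hlt
    · exact ⟨v - u, u, hau, by omega, by omega, by rwa [Nat.add_sub_cancel' hlt.le]⟩
    · exact ⟨u - v, v, hav, by omega, by omega, by rw [Nat.add_sub_cancel' hlt.le, huv]⟩
  obtain ⟨s, has, hsb, hpos, hp⟩ := Nat.find_spec hex
  refine ⟨s, s + Nat.find hex, has, by omega, hsb, hp, fun u hu v hv huv => ?_⟩
  by_contra hne
  simp only [Set.mem_Ico] at hu hv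
  rcases Nat.lt_or_gt_of_ne hne with hlt | hlt
  · exact Nat.find_min hex (show v - u < Nat.find hex by omega)
      ⟨u, by omega, by omega, by omega, by rwa [Nat.add_sub_cancel' hlt.le]⟩
  · exact Nat.find_min hex (show u - v < Nat.find hex by omega)
      ⟨v, by omega, by omega, by omega, by rw [Nat.add_sub_cancel' hlt.le, huv]⟩

end Excise

namespace Matrix

section Walks

variable {ι k : Type*}

def walkWeight [CommMonoid k] (A : Matrix ι ι k) (p : ℕ → ι) (a b : ℕ) : k :=
  ∏ u ∈ Finset.Ico a b, A (p u) (p (u + 1))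

variable [CommMonoid k] (A : Matrix ι ι k)

theorem walkWeight_mul_walkWeight (p : ℕ → ι) {a b c : ℕ} (hab : a ≤ b) (hbc : b ≤ c) :
    A.walkWeight p a b * A.walkWeight p b c = A.walkWeight p a c :=
  Finset.prod_Ico_consecutive _ hab hbc

theorem walkWeight_succ (p : ℕ → ι) {a b : ℕ} (hab : a ≤ b) :
    A.walkWeight p a (b + 1) = A.walkWeight p a b * A (p b) (p (b + 1)) :=
  Finset.prod_Ico_succ_top hab _

theorem walkWeight_cons (i : ι) (p : ℕ → ι) (m : ℕ) :
    A.walkWeight (fun u => Nat.casesOn u i p) 0 (m + 1) = A i (p 0) * A.walkWeight p 0 m := by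
  rw [walkWeight, Finset.prod_eq_prod_Ico_succ_bot (Nat.succ_pos m), walkWeight,
    ← Finset.prod_Ico_add' _ 0 m 1]
  rfl

theorem walkWeight_excise (p : ℕ → ι) {a s t b : ℕ} (has : a ≤ s) (hst : s ≤ t) (htb : t ≤ b)
    (hp : p s = p t) :
    A.walkWeight (excise p s (t - s)) a (b - (t - s)) =
      A.walkWeight p a s * A.walkWeight p t b := by
  rw [← walkWeight_mul_walkWeight A _ has (by omega)]
  congr 1
  · refine Finset.prod_congr rfl fun u hu => ?_
    rw [Finset.mem_Ico] at hu
    simp only [excise, if_pos hu.2.le, if_pos (Nat.succ_le_of_lt hu.2)]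
  · have h := Finset.prod_Ico_add' (fun u => A (p u) (p (u + 1))) s (b - (t - s)) (t - s)
    rw [show s + (t - s) = t by omega, show b - (t - s) + (t - s) = b by omega] at h
    rw [walkWeight, walkWeight, ← h]
    refine Finset.prod_congr rfl fun u hu => ?_
    rw [Finset.mem_Ico] at hu
    have hnext : excise p s (t - s) (u + 1) = p (u + (t - s) + 1) := by
      rw [excise, if_neg (by omega), Nat.add_right_comm]
    rcases hu.1.eq_or_lt with rfl | hlt
    · rw [hnext, excise, if_pos le_rfl, hp, Nat.add_sub_cancel' hst]
    · rw [hnext, excise, if_neg (by omega)]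

theorem prod_viaFintypeEmbedding {α : Type*} [Fintype α] [Fintype ι]
    [DecidableEq ι] (hdiag : ∀ i, A i i = 1) (e : Equiv.Perm α) (f : α ↪ ι) :
    ∏ i, A i (e.viaFintypeEmbedding f i) = ∏ a, A (f a) (f (e a)) := by
  rw [← Finset.prod_mul_prod_compl (Finset.univ.map f), Finset.prod_map,
    Finset.prod_eq_one (s := (Finset.univ.map f)ᶜ), mul_one]
  · simp only [Equiv.Perm.viaFintypeEmbedding_apply_image]
  · intro i hi
    rw [Equiv.Perm.viaFintypeEmbedding_apply_notMem_range, hdiag]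
    simpa using hi

theorem walkWeight_eq_prod_finRotate (p : ℕ → ι) (s d : ℕ) (hp : p (s + d) = p s) :
    A.walkWeight p s (s + d) = ∏ u : Fin d, A (p (s + u)) (p (s + finRotate d u)) := by
  rw [walkWeight, Finset.prod_Ico_eq_prod_range, Nat.add_sub_cancel_left,
    ← Fin.prod_univ_eq_prod_range]
  refine Finset.prod_congr rfl fun u _ => ?_
  obtain ⟨d, rfl⟩ : ∃ d', d = d' + 1 := Nat.exists_eq_succ_of_ne_zero (Fin.pos u).ne'
  rw [coe_finRotate]
  split_ifs with h
  · rw [h, Fin.val_last, add_zero, ← hp]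
    ring_nf
  · ring_nf

theorem exists_perm_prod_eq_walkWeight [Fintype ι] [DecidableEq ι] (hdiag : ∀ i, A i i = 1)
    (p : ℕ → ι) {s t : ℕ} (hst : s ≤ t) (hp : p s = p t) (hinj : Set.InjOn p (Set.Ico s t)) :
    ∃ σ : Equiv.Perm ι, ∏ i, A i (σ i) = A.walkWeight p s t := by
  obtain ⟨d, rfl⟩ := Nat.exists_eq_add_of_le hst
  let f : Fin d ↪ ι := ⟨fun u => p (s + u), fun u v h => Fin.ext <| by
    simpa using hinj (by simp) (by simp) h⟩
  refine ⟨(finRotate d).viaFintypeEmbedding f, ?_⟩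
  rw [prod_viaFintypeEmbedding A hdiag, walkWeight_eq_prod_finRotate A p s d hp.symm]
  rfl

end Walks

section Tropical

variable {ι k : Type*} [DecidableEq ι] [TropSemifield k] (A : Matrix ι ι k)

theorem one_add_eq_self (hdiag : ∀ i, A i i = 1) : 1 + A = A := by
  ext i j
  by_cases h : i = j
  · subst h
    rw [add_apply, one_apply_eq, hdiag, TropSemifield.add_idem]
  · rw [add_apply, one_apply_ne h, zero_add]

variable [Fintype ι]

theorem pow_apply_tle_pow_apply (hdiag : ∀ i, A i i = 1) {m m' : ℕ} (h : m ≤ m') (i j : ι) :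
    tle ((A ^ m) i j) ((A ^ m') i j) := by
  induction m', h using Nat.le_induction with
  | base => exact tle.refl _
  | succ m' _ ih =>
    have hstep : A ^ m' + A ^ (m' + 1) = A ^ (m' + 1) := by
      rw [pow_succ]
      nth_rewrite 1 [← mul_one (A ^ m')]
      rw [← mul_add, one_add_eq_self A hdiag]
    exact ih.trans (congrFun (congrFun hstep i) j)

theorem walkWeight_tle_pow_apply (p : ℕ → ι) {a b : ℕ} (hab : a ≤ b) :
    tle (A.walkWeight p a b) ((A ^ (b - a)) (p a) (p b)) := by
  induction b, hab using Nat.le_induction with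
  | base => simpa [walkWeight] using tle.refl (1 : k)
  | succ b hab ih =>
    rw [walkWeight_succ A p hab, Nat.sub_add_comm hab, pow_succ, mul_apply]
    exact (ih.mul (tle.refl _)).trans
      (tle_sum_of_mem (fun l => (A ^ (b - a)) (p a) l * A l (p (b + 1))) (Finset.mem_univ (p b)))

theorem walkWeight_tle_one_of_injOn (hdiag : ∀ i, A i i = 1)
    (hperm : ∀ σ : Equiv.Perm ι, tle (∏ i, A i (σ i)) 1)
    (p : ℕ → ι) {s t : ℕ} (hst : s ≤ t) (hp : p s = p t) (hinj : Set.InjOn p (Set.Ico s t)) :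
    tle (A.walkWeight p s t) 1 := by
  obtain ⟨σ, hσ⟩ := exists_perm_prod_eq_walkWeight A hdiag p hst hp hinj
  exact hσ ▸ hperm σ

theorem walkWeight_tle_pow_card_sub_one (hdiag : ∀ i, A i i = 1)
    (hperm : ∀ σ : Equiv.Perm ι, tle (∏ i, A i (σ i)) 1) (p : ℕ → ι) {a b : ℕ} (hab : a ≤ b) :
    tle (A.walkWeight p a b) ((A ^ (Fintype.card ι - 1)) (p a) (p b)) := by
  induction hlen : b - a using Nat.strong_induction_on generalizing p b with
  | _ len ih =>
  by_cases hinj : Set.InjOn p (Set.Icc a b)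
  · have hcard := Finset.card_le_card_of_injOn p (fun _ _ => Finset.mem_univ _)
      (by rwa [Finset.coe_Icc])
    rw [Nat.card_Icc, Finset.card_univ] at hcard
    exact (walkWeight_tle_pow_apply A p hab).trans
      (pow_apply_tle_pow_apply A hdiag (by omega) _ _)
  obtain ⟨s, t, has, hst, htb, hp, hcyc⟩ := exists_loop_injOn_of_not_injOn hinj
  have hshort := ih (b - (t - s) - a) (by omega) (excise p s (t - s)) (by omega) rfl
  rw [excise_of_le p _ has, excise_sub p hst.le htb hp,
    walkWeight_excise A p has hst.le htb hp] at hshort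
  have hcycle := walkWeight_tle_one_of_injOn A hdiag hperm p hst.le hp hcyc
  rw [← walkWeight_mul_walkWeight A p (has.trans hst.le) htb,
    ← walkWeight_mul_walkWeight A p has hst.le, mul_right_comm]
  simpa using hshort.mul hcycle

theorem mul_pow_apply_tle {x c : k} (m : ℕ) (i j : ι)
    (h : ∀ p : ℕ → ι, p 0 = i → p m = j → tle (x * A.walkWeight p 0 m) c) :
    tle (x * (A ^ m) i j) c := by
  induction m generalizing x i with
  | zero =>
    by_cases hij : i = j
    · subst hij
      simpa [walkWeight] using h (fun _ => i) rfl rfl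
    · rw [pow_zero, one_apply_ne hij, mul_zero]
      exact zero_tle_s18 c
  | succ m ih =>
    rw [pow_succ', mul_apply, Finset.mul_sum]
    refine sum_tle fun l _ => ?_
    rw [← mul_assoc]
    refine ih l fun p hp0 hpm => ?_
    have hcons := h (fun u => Nat.casesOn u i p) rfl hpm
    rwa [walkWeight_cons, hp0, ← mul_assoc] at hcons

end Tropical

end Matrix

theorem stmt18_general {k : Type*} [TropSemifield k]
    {n : ℕ} (A : Matrix (Fin n) (Fin n) k)
    (hdiag : ∀ i, A i i = 1)
    (hdet : (∑ s : Equiv.Perm (Fin n), ∏ i, A i (s i)) = 1) :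
    A ^ n = A ^ (n - 1) := by
  have hperm : ∀ σ : Equiv.Perm (Fin n), tle (∏ i, A i (σ i)) 1 := fun σ =>
    hdet ▸ tle_sum_of_mem (fun s : Equiv.Perm (Fin n) => ∏ i, A i (s i)) (Finset.mem_univ σ)
  have hwalk := A.walkWeight_tle_pow_card_sub_one hdiag hperm
  rw [Fintype.card_fin] at hwalk
  ext i j
  refine tle.antisymm ?_ (A.pow_apply_tle_pow_apply hdiag (Nat.sub_le n 1) i j)
  simpa using A.mul_pow_apply_tle (x := 1) n i j fun p hi hj => by
    simpa [hi, hj] using hwalk p (Nat.zero_le n)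

theorem stmt18 {k : Type*} [TropSemifield k]
    (hto : TotallyOrderedTSF k) (hrat : RationalTSF k)
    {n : ℕ} (A : Matrix (Fin n) (Fin n) k)
    (hdiag : ∀ i, A i i = 1)
    (hdet : (∑ s : Equiv.Perm (Fin n), ∏ i, A i (s i)) = 1) :
    A ^ n = A ^ (n - 1) :=
  stmt18_general A hdiag hdet
end
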